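/- arXiv:math/9705226 — 4 statements merged into one kernel-verified Lean document; each statement's English description precedes it below -/
import Mathlib

section
/- (Transitivity of the Kalikow property.) If the pair of cardinals (λ₂, λ₁) has the Kalikow property and the pair (λ₁, λ₀) has the Kalikow property, then the pair (λ₂, λ₀) has the Kalikow property. -/
open Cardinal Filter

universe u v

/-- An algebra (first-order structure with only function symbols) whose
function symbols are indexed by `ι`, on the universe `α`.  Each symbol `i`
has a finite arity `arity i` and is interpreted by `op i`. -/
structure AlgebraOn (ι : Type v) (α : Type u) where
  arity : ι → ℕ
  op : (i : ι) → (Fin (arity i) → α) → α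

/-- The closure of a set `X ⊆ α` under the operations of the algebra `M`:
the universe of the substructure generated by `X`. -/
def AlgebraOn.cl {ι : Type v} {α : Type u} (M : AlgebraOn ι α) (X : Set α) : Set α :=
  ⋂₀ {Y : Set α | X ⊆ Y ∧
      ∀ (i : ι) (v : Fin (M.arity i) → α), (∀ j, v j ∈ Y) → M.op i v ∈ Y}

/-- Condition `(★)⁰_M`: for every `ω`-sequence of elements, all but finitely
many of its terms belong to the closure of the set of strictly later terms. -/
def Star0 {ι : Type v} {α : Type u} (M : AlgebraOn ι α) : Prop :=
  ∀ a : ℕ → α, ∀ᶠ n in Filter.atTop, a n ∈ M.cl (a '' Set.Ioi n)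

/-- Condition `(★)¹_M`: there is no `ω`-sequence of countably infinite subsets
whose closures are strictly decreasing. -/
def Star1 {ι : Type v} {α : Type u} (M : AlgebraOn ι α) : Prop :=
  ¬ ∃ A : ℕ → Set α,
      (∀ n, (A n).Countable ∧ (A n).Infinite) ∧
      (∀ n, M.cl (A (n + 1)) ⊂ M.cl (A n))

/-- Condition `(★)²_M`: every countably infinite set has a countably infinite
subset all of whose countably infinite subsets generate the same closure. -/
def Star2 {ι : Type v} {α : Type u} (M : AlgebraOn ι α) : Prop :=
  ∀ A : Set α, A.Countable → A.Infinite →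
    ∃ B : Set α, B ⊆ A ∧ B.Countable ∧ B.Infinite ∧
      ∀ C : Set α, C ⊆ B → C.Countable → C.Infinite → M.cl B = M.cl C

/-- `Pr★(λ)`: there is an algebra on `λ` with countably many function symbols
satisfying `(★)⁰`. -/
def PrStar (lam : Cardinal.{u}) : Prop :=
  ∃ M : AlgebraOn ℕ lam.out, Star0 M

/-- `Pr★(λ, κ)`: there is an algebra on `λ` with at most `κ` function symbols
satisfying `(★)⁰`. -/
def PrStarK (lam kap : Cardinal.{u}) : Prop :=
  ∃ (ι : Type u) (M : AlgebraOn ι lam.out), #ι ≤ kap ∧ Star0 M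

/-- The pair `(λ, κ)` has the Kalikow property: there are functions
`F n : (^n λ) → κ` such that, with `F η n = F n (η ↾ n)`, two `ω`-sequences
over `λ` are eventually equal iff their images are eventually equal. -/
def HasKalikow (lam kap : Cardinal.{u}) : Prop :=
  ∃ F : (n : ℕ) → (Fin n → lam.out) → kap.out,
    ∀ η ν : ℕ → lam.out,
      (∀ᶠ n in Filter.atTop, η n = ν n) ↔
        (∀ᶠ n in Filter.atTop,
          F n (fun i => η i.1) = F n (fun i => ν i.1))

/-- Transitivity of the Kalikow property. -/
theorem kalikow_trans (lam₂ lam₁ lam₀ : Cardinal.{u})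
    (h₂₁ : HasKalikow lam₂ lam₁) (h₁₀ : HasKalikow lam₁ lam₀) :
    HasKalikow lam₂ lam₀ := by
  obtain ⟨F, hF⟩ := h₂₁
  obtain ⟨G, hG⟩ := h₁₀
  refine ⟨fun n s => G n (fun i => F i.1 (fun j => s ⟨j.1, j.2.trans i.2⟩)), fun η ν => ?_⟩
  rw [hF η ν, hG (fun n => F n (fun i => η i.1)) (fun n => F n (fun i => ν i.1))]
end

section
/- Let M be an algebra on a cardinal λ (a first-order structure with universe λ in a language consisting of countably many function symbols and no relation symbols), and let cl_M(X) denote the closure of a set X ⊆ λ under the functions of M (the universe of the substructure generated by X). If M satisfies (★)⁰_M — for every sequence ⟨α_n : n < ω⟩ of elements of λ, for all but finitely many n one has α_n ∈ cl_M({α_k : n < k < ω}) — then M satisfies (★)¹_M: there is no sequence ⟨A_n : n < ω⟩ of countably infinite subsets of λ such that cl_M(A_{n+1}) is a proper subset of cl_M(A_n) for every n < ω. -/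
open Cardinal Filter

universe u v

lemma AlgebraOn.cl_closed {ι : Type v} {α : Type u} (M : AlgebraOn ι α) (X : Set α) :
    ∀ (i : ι) (w : Fin (M.arity i) → α), (∀ j, w j ∈ M.cl X) → M.op i w ∈ M.cl X := by
  intro i w hw
  intro Y hY
  exact hY.2 i w (fun j => hw j Y hY)

lemma AlgebraOn.cl_min {ι : Type v} {α : Type u} (M : AlgebraOn ι α) {X Y : Set α}
    (hXY : X ⊆ Y) (hY : ∀ (i : ι) (w : Fin (M.arity i) → α), (∀ j, w j ∈ Y) → M.op i w ∈ Y) :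
    M.cl X ⊆ Y :=
  Set.sInter_subset_of_mem ⟨hXY, hY⟩

lemma AlgebraOn.cl_subset_cl {ι : Type v} {α : Type u} (M : AlgebraOn ι α) {X Y : Set α}
    (hXY : X ⊆ M.cl Y) : M.cl X ⊆ M.cl Y :=
  M.cl_min hXY (M.cl_closed Y)

lemma AlgebraOn.subset_cl {ι : Type v} {α : Type u} (M : AlgebraOn ι α) (X : Set α) :
    X ⊆ M.cl X := fun _ hx _ hY => hY.1 hx

/-- `(★)⁰_M` implies `(★)¹_M`. -/
theorem star0_implies_star1 (lam : Cardinal.{u}) (M : AlgebraOn ℕ lam.out)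
    (h : Star0 M) : Star1 M := by
  rintro ⟨A, _, hlt⟩
  have hex : ∀ n, ∃ x, x ∈ M.cl (A n) ∧ x ∉ M.cl (A (n + 1)) := by
    intro n
    obtain ⟨x, hx1, hx2⟩ := Set.exists_of_ssubset (hlt n)
    exact ⟨x, hx1, hx2⟩
  choose a ha1 ha2 using hex
  -- closures are antitone
  have hmono : ∀ m n, m ≤ n → M.cl (A n) ⊆ M.cl (A m) := by
    intro m n hmn
    induction hmn with
    | refl => exact subset_rfl
    | step h ih => exact (subset_of_ssubset (hlt _)).trans ih
  obtain ⟨n, hn⟩ := (h a).exists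
  have : M.cl (a '' Set.Ioi n) ⊆ M.cl (A (n + 1)) := by
    apply M.cl_subset_cl
    rintro _ ⟨k, hk, rfl⟩
    exact hmono (n + 1) k hk (ha1 k)
  exact ha2 n (this hn)
end

section
/- Let M be an algebra on a cardinal λ (a first-order structure with universe λ in a language consisting of countably many function symbols and no relation symbols), and let cl_M(X) denote the closure of a set X ⊆ λ under the functions of M (the universe of the substructure generated by X). If M satisfies (★)¹_M — there is no sequence ⟨A_n : n < ω⟩ of countably infinite subsets of λ such that cl_M(A_{n+1}) is a proper subset of cl_M(A_n) for every n < ω — then M satisfies (★)²_M: for every countably infinite A ⊆ λ there is a countably infinite B ⊆ A such that for every countably infinite C ⊆ B one has cl_M(B) = cl_M(C). -/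
open Cardinal Filter

universe u v

lemma AlgebraOn.cl_mono {ι : Type v} {α : Type u} (M : AlgebraOn ι α) {X Y : Set α}
    (h : X ⊆ Y) : M.cl X ⊆ M.cl Y := by
  intro x hx Z hZ
  exact hx Z ⟨h.trans hZ.1, hZ.2⟩

/-- `(★)¹_M` implies `(★)²_M`. -/
theorem star1_implies_star2 (lam : Cardinal.{u}) (M : AlgebraOn ℕ lam.out)
    (h : Star1 M) : Star2 M := by
  intro A hAc hAi
  by_contra hno
  push_neg at hno
  set T := {S : Set lam.out // S ⊆ A ∧ S.Countable ∧ S.Infinite} with hT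
  have step : ∀ t : T, ∃ t' : T, M.cl t'.val ⊂ M.cl t.val := by
    rintro ⟨S, hSA, hSc, hSi⟩
    obtain ⟨C, hCS, hCc, hCi, hne⟩ := hno S hSA hSc hSi
    exact ⟨⟨C, hCS.trans hSA, hCc, hCi⟩, lt_of_le_of_ne (M.cl_mono hCS) (Ne.symm hne)⟩
  choose f hf using step
  apply h
  refine ⟨fun n => (f^[n] ⟨A, le_refl A, hAc, hAi⟩).val, fun n => ⟨(f^[n] _).prop.2.1, (f^[n] _).prop.2.2⟩, fun n => ?_⟩
  show M.cl (f^[n+1] _).val ⊂ M.cl (f^[n] _).val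
  rw [Function.iterate_succ_apply']
  exact hf _
end

section
/- For every natural number n, the cardinal ℵ_n has the (★)-property, i.e. Pr★(ℵ_n) holds: there exists an algebra M on ℵ_n (a first-order structure with universe ℵ_n in a language with countably many function symbols and no relation symbols) such that for every sequence ⟨α_k : k < ω⟩ of ordinals below ℵ_n, for all but finitely many k one has α_k ∈ cl_M({α_j : k < j < ω}). -/
open Cardinal Filter

universe u v

set_option linter.unusedSectionVars false

-- basic cl lemmas
namespace AlgebraOn
variable {ι : Type v} {α : Type u} (M : AlgebraOn ι α)

theorem subset_cl_s6 (X : Set α) : X ⊆ M.cl X := by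
  intro x hx Y hY; exact hY.1 hx

theorem cl_op {X : Set α} (i : ι) (v : Fin (M.arity i) → α)
    (hv : ∀ j, v j ∈ M.cl X) : M.op i v ∈ M.cl X := by
  intro Y hY; exact hY.2 i v (fun j => hv j Y hY)

theorem cl_min_s6 {X Y : Set α} (hXY : X ⊆ Y)
    (hY : ∀ (i : ι) (v : Fin (M.arity i) → α), (∀ j, v j ∈ Y) → M.op i v ∈ Y) :
    M.cl X ⊆ Y := fun _ hx => hx Y ⟨hXY, hY⟩

theorem cl_mono' {X Z : Set α} (h : X ⊆ M.cl Z) : M.cl X ⊆ M.cl Z :=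
  M.cl_min_s6 h (fun i v hv => M.cl_op i v hv)

end AlgebraOn

section Step
attribute [local instance] Classical.propDecidable
variable {α β : Type u} [Nonempty α]
variable (r : β → β → Prop) (N : AlgebraOn ℕ α) (e : α → β)
variable (jf : (x : β) → {y // r y x} → α)

noncomputable def pinv (e : α → β) : β → α := fun b =>
  if h : ∃ a, e a = b then h.choose else Classical.arbitrary α

theorem pinv_e (e : α → β) (he : Function.Injective e) (a : α) : pinv e (e a) = a := by
  have h : ∃ a', e a' = e a := ⟨a, rfl⟩
  simp only [pinv, dif_pos h]
  exact he h.choose_spec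

noncomputable def Fdec : β → β → β := fun x c =>
  if h : ∃ yp : {y // r y x}, e (jf x yp) = c then (h.choose).1 else x

theorem Fdec_G (he : Function.Injective e) (hjf : ∀ x, Function.Injective (jf x))
    {y x : β} (hy : r y x) : Fdec r e jf x (e (jf x ⟨y, hy⟩)) = y := by
  have h : ∃ yp : {y' // r y' x}, e (jf x yp) = e (jf x ⟨y, hy⟩) := ⟨⟨y, hy⟩, rfl⟩
  simp only [Fdec, dif_pos h]
  have := hjf x (he h.choose_spec)
  rw [this]

noncomputable def stepArity : ℕ → ℕ
  | 0 => 2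
  | 1 => 2
  | 2 => 0
  | (k+3) => N.arity k

noncomputable def stepOp : (i : ℕ) → (Fin (stepArity N i) → β) → β
  | 0 => fun v => Fdec r e jf (v ⟨0, by simp [stepArity]⟩) (v ⟨1, by simp [stepArity]⟩)
  | 1 => fun v => if h : r (v ⟨1, by simp [stepArity]⟩) (v ⟨0, by simp [stepArity]⟩) then e (jf (v ⟨0, by simp [stepArity]⟩) ⟨v ⟨1, by simp [stepArity]⟩, h⟩) else v ⟨0, by simp [stepArity]⟩
  | 2 => fun _ => e (Classical.arbitrary α)
  | (k+3) => fun v => e (N.op k (fun t => pinv e (v t)))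

noncomputable def stepAlg : AlgebraOn ℕ β :=
  ⟨stepArity N, stepOp r N e jf⟩

theorem step_cl_emb (he : Function.Injective e) (Y : Set α) :
    ∀ x ∈ N.cl Y, e x ∈ (stepAlg r N e jf).cl (e '' Y) := by
  set M := stepAlg r N e jf
  have : N.cl Y ⊆ {x : α | e x ∈ M.cl (e '' Y)} := by
    apply N.cl_min_s6
    · intro x hx
      exact M.subset_cl_s6 _ ⟨x, hx, rfl⟩
    · intro i w hw
      have h1 : M.op (i+3) (fun t => e (w t)) ∈ M.cl (e '' Y) :=
        M.cl_op (i+3) _ (fun j => hw j)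
      have h2 : M.op (i+3) (fun t => e (w t)) = e (N.op i w) := by
        show e (N.op i (fun t => pinv e (e (w t)))) = e (N.op i w)
        congr 1
        congr 1
        funext t
        exact pinv_e e he (w t)
      rwa [h2] at h1
  exact fun x hx => this hx

theorem step_star0 (hwf : WellFounded r)
    (htri : ∀ x y : β, r x y ∨ x = y ∨ r y x)
    (he : Function.Injective e) (hjf : ∀ x, Function.Injective (jf x))
    (hN : Star0 N) : Star0 (stepAlg r N e jf) := by
  set M := stepAlg r N e jf with hM
  intro a
  -- Bad set
  set Bad : Set ℕ := {k | ∀ j, k < j → r (a j) (a k)} with hBad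
  have hBadFin : Bad.Finite := by
    by_contra hinf
    have hinf' : Bad.Infinite := hinf
    have hT : (a '' Bad).Nonempty := (hinf'.nonempty).image a
    obtain ⟨m, hmT, hmin⟩ := hwf.has_min (a '' Bad) hT
    obtain ⟨k₀, hk₀, hak₀⟩ := hmT
    obtain ⟨k₁, hk₁, hlt⟩ := hinf'.exists_gt k₀
    exact hmin (a k₁) ⟨k₁, hk₁, rfl⟩ (hak₀ ▸ hk₀ k₁ hlt)
  obtain ⟨K₀, hK₀⟩ := hBadFin.bddAbove
  -- code sequence
  set c : ℕ → α := fun k =>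
    if h : ∃ j, k < j ∧ r (a k) (a j) then jf (a h.choose) ⟨a k, h.choose_spec.2⟩
    else Classical.arbitrary α with hc
  have hstar := hN c
  filter_upwards [hstar, eventually_gt_atTop K₀] with k hck hkK
  -- k ∉ Bad
  have hkBad : k ∉ Bad := fun h => absurd (hK₀ h) (not_le.mpr hkK)
  rw [hBad, Set.mem_setOf_eq] at hkBad
  push_neg at hkBad
  obtain ⟨j, hkj, hnr⟩ := hkBad
  rcases htri (a j) (a k) with h1 | h1 | h1
  · exact absurd h1 hnr
  · -- a j = a k, so a k in the tail itself
    exact M.subset_cl_s6 _ ⟨j, hkj, h1⟩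
  · -- r (a k) (a j)
    have hex : ∃ j', k < j' ∧ r (a k) (a j') := ⟨j, hkj, h1⟩
    -- every e (c i) for i > k lies in M.cl (a '' Ioi k)
    have hecl : ∀ i, k < i → e (c i) ∈ M.cl (a '' Set.Ioi k) := by
      intro i hi
      by_cases hexi : ∃ j', i < j' ∧ r (a i) (a j')
      · have hci : c i = jf (a hexi.choose) ⟨a i, hexi.choose_spec.2⟩ := by
          rw [hc]; exact dif_pos hexi
        have h0 : M.op 1 (fun t : Fin 2 => if (t : ℕ) = 0 then a hexi.choose else a i)
            ∈ M.cl (a '' Set.Ioi k) := by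
          apply M.cl_op
          intro t
          by_cases ht : (t : ℕ) = 0
          · simp only [ht, if_pos]
            exact M.subset_cl_s6 _ ⟨hexi.choose, lt_trans hi hexi.choose_spec.1, rfl⟩
          · simp only [ht, if_neg]
            exact M.subset_cl_s6 _ ⟨i, hi, rfl⟩
        have heq : M.op 1 (fun t : Fin 2 => if (t : ℕ) = 0 then a hexi.choose else a i)
            = e (c i) := by
          show (if h : r (a i) (a hexi.choose) then e (jf (a hexi.choose) ⟨a i, h⟩)
              else a hexi.choose) = e (c i)
          rw [dif_pos hexi.choose_spec.2, hci]
        rwa [heq] at h0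
      · have hci : c i = Classical.arbitrary α := by rw [hc]; exact dif_neg hexi
        have h0 : M.op 2 (fun t : Fin 0 => t.elim0) ∈ M.cl (a '' Set.Ioi k) :=
          M.cl_op 2 _ (fun t => t.elim0)
        have heq : M.op 2 (fun t : Fin 0 => t.elim0) = e (c i) := by
          rw [hci]; rfl
        rwa [heq] at h0
    -- so e (c k) ∈ M.cl (a '' Ioi k)
    have heck : e (c k) ∈ M.cl (a '' Set.Ioi k) := by
      have h1' : e (c k) ∈ M.cl (e '' (c '' Set.Ioi k)) :=
        step_cl_emb r N e jf he _ _ hck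
      have h2' : e '' (c '' Set.Ioi k) ⊆ M.cl (a '' Set.Ioi k) := by
        rintro _ ⟨_, ⟨i, hi, rfl⟩, rfl⟩
        exact hecl i hi
      exact M.cl_mono' h2' h1'
    -- decode
    have hckval : c k = jf (a hex.choose) ⟨a k, hex.choose_spec.2⟩ := by
      rw [hc]; exact dif_pos hex
    have h0 : M.op 0 (fun t : Fin 2 => if (t : ℕ) = 0 then a hex.choose else e (c k))
        ∈ M.cl (a '' Set.Ioi k) := by
      apply M.cl_op
      intro t
      by_cases ht : (t : ℕ) = 0
      · simp only [ht, if_pos]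
        exact M.subset_cl_s6 _ ⟨hex.choose, hex.choose_spec.1, rfl⟩
      · simp only [ht, if_neg]
        exact heck
    have heq : M.op 0 (fun t : Fin 2 => if (t : ℕ) = 0 then a hex.choose else e (c k))
        = a k := by
      show Fdec r e jf (a hex.choose) (e (c k)) = a k
      rw [hckval]
      exact Fdec_G r e jf he hjf hex.choose_spec.2
    rwa [heq] at h0

end Step

theorem base_star0 {β : Type u} [Countable β] [Nonempty β] :
    ∃ M : AlgebraOn ℕ β, Star0 M := by
  obtain ⟨s, hs⟩ := exists_surjective_nat β
  refine ⟨⟨fun _ => 0, fun k _ => s k⟩, ?_⟩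
  intro a
  filter_upwards with n
  intro Y hY
  obtain ⟨k, hk⟩ := hs (a n)
  have := hY.2 k (fun t => t.elim0) (fun j => j.elim0)
  rwa [show (⟨fun _ => 0, fun k _ => s k⟩ : AlgebraOn ℕ β).op k (fun t => t.elim0) = s k from rfl, hk] at this

theorem prStar_succ (κ : Cardinal.{u}) (hκ : κ ≠ 0) (ih : PrStar κ) :
    PrStar (Order.succ κ) := by
  obtain ⟨N, hN⟩ := ih
  haveI : Nonempty κ.out := Cardinal.mk_ne_zero_iff.mp (by rw [mk_out]; exact hκ)
  obtain ⟨g⟩ : Nonempty ((Order.succ κ).out ≃ (Order.succ κ).ord.ToType) :=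
    Cardinal.eq.mp (by rw [mk_out, mk_ord_toType])
  set r : (Order.succ κ).out → (Order.succ κ).out → Prop := fun x y => g x < g y with hr
  have hwf : WellFounded r := InvImage.wf g wellFounded_lt
  have htri : ∀ x y, r x y ∨ x = y ∨ r y x := by
    intro x y
    rcases lt_trichotomy (g x) (g y) with h | h | h
    · exact Or.inl h
    · exact Or.inr (Or.inl (g.injective h))
    · exact Or.inr (Or.inr h)
  obtain ⟨e⟩ : Nonempty (κ.out ↪ (Order.succ κ).out) := (Cardinal.le_def _ _).mp
    (by rw [mk_out, mk_out]; exact (Order.le_succ κ))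
  have hjf : ∀ x, ∃ f : {y // r y x} → κ.out, Function.Injective f := by
    intro x
    have h1 : #{y // r y x} ≤ #κ.out := by
      have emb : {y // r y x} ↪ Set.Iio (g x) :=
        ⟨fun y => ⟨g y.1, y.2⟩, fun y z h => Subtype.ext (g.injective (congrArg Subtype.val h))⟩
      calc #{y // r y x} ≤ #(Set.Iio (g x)) := mk_le_of_injective emb.injective
        _ ≤ κ := Order.lt_succ_iff.mp (Cardinal.mk_Iio_ord_toType (g x))
        _ = #κ.out := (mk_out κ).symm
    obtain ⟨f⟩ := (Cardinal.le_def _ _).mp h1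
    exact ⟨f, f.injective⟩
  choose jf hjfinj using hjf
  exact ⟨stepAlg r N e jf, step_star0 r N e jf hwf htri e.injective hjfinj hN⟩

/-- For every `n < ω`, the cardinal `ℵ_n` has the `(★)`-property. -/
theorem prStar_aleph_nat (n : ℕ) : PrStar (Cardinal.aleph n) := by
  induction n with
  | zero =>
    have h0 : #(Cardinal.aleph (0:ℕ)).out = ℵ₀ := by
      rw [mk_out]; exact_mod_cast Cardinal.aleph_zero
    haveI : Countable (Cardinal.aleph (0:ℕ)).out :=
      Cardinal.mk_le_aleph0_iff.mp h0.le
    haveI : Nonempty (Cardinal.aleph (0:ℕ)).out :=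
      Cardinal.mk_ne_zero_iff.mp (by rw [h0]; exact aleph0_ne_zero)
    exact base_star0
  | succ n ih =>
    have hsucc : Cardinal.aleph ((n+1 : ℕ)) = Order.succ (Cardinal.aleph (n:ℕ)) := by
      rw [Nat.cast_add_one, Ordinal.add_one_eq_succ, Cardinal.aleph_succ]
    rw [hsucc]
    exact prStar_succ _ (Cardinal.aleph_pos _).ne' ih
end
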